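/- arXiv:2403.16284 — 2 statements merged into one kernel-verified Lean document; each statement's English description precedes it below -/
import Mathlib

section
/- Let A = {A_1, …, A_m} be a non-disjoint (v,m,k_1,…,k_m)-GPSEDF in a finite group G of order v, written additively (G is not assumed abelian). Let g_1, …, g_n ∈ G be such that the translates g_1 + A_m, g_2 + A_m, …, g_n + A_m are pairwise disjoint. Then {A_1, …, A_{m−1}, ⋃_{i=1}^n (g_i + A_m)} is a non-disjoint (v, m, k_1, …, k_{m−1}, n·k_m)-GPSEDF in G. -/
/-! Translating `A` by `g` on the left turns `Δ(A, B)` into `g + Δ(A, B)`, and translating `B`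
turns it into `Δ(A, B) - g`, since `a - (g + b) = (a - b) - g` holds without commutativity. Both
maps permute `G`, so they fix `λG`. As the translates `gᵢ + A` are pairwise disjoint, `Δ` of their
union is the sum of the `n` translated multisets, namely `(nλ)G`. -/

/-- The external difference multiset `Δ(A,B) = {a - b : a ∈ A, b ∈ B}` (with multiplicity). -/
def extDiff {G : Type*} [AddGroup G] (A B : Finset G) : Multiset G :=
  A.val.bind fun a => B.val.map fun b => a - b

/-- `A₁,…,A_m` is a non-disjoint `(|G|,m,k₁,…,k_m)`-GPSEDF in `G`: `|Aᵢ| = kᵢ` and for all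
`i ≠ j`, `Δ(Aᵢ,Aⱼ) = λᵢⱼ G` as multisets, where `λᵢⱼ = kᵢkⱼ/|G|`. -/
def IsNDGPSEDF {G : Type*} [AddGroup G] [Fintype G] {m : ℕ}
    (A : Fin m → Finset G) (k : Fin m → ℕ) : Prop :=
  (∀ i, (A i).card = k i) ∧
  ∀ i j, i ≠ j → ∃ lam : ℕ, lam * Fintype.card G = k i * k j ∧
    extDiff (A i) (A j) = lam • (Finset.univ : Finset G).val

theorem Multiset.bind_const {α β : Type*} (s : Multiset α) (t : Multiset β) :
    (s.bind fun _ => t) = card s • t := by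
  simp [Multiset.bind, Multiset.join, Multiset.map_const', Multiset.sum_replicate]

section extDiff

open Function

variable {G : Type*} [AddGroup G]

theorem extDiff_image_add_left [DecidableEq G] (g : G) (A B : Finset G) :
    extDiff (A.image (g + ·)) B = (extDiff A B).map (g + ·) := by
  simp only [extDiff, Finset.image_val_of_injOn (add_right_injective g).injOn,
    Multiset.bind_map, Multiset.map_bind, Multiset.map_map, Function.comp_def, add_sub_assoc]

theorem extDiff_image_add_right [DecidableEq G] (g : G) (A B : Finset G) :
    extDiff A (B.image (g + ·)) = (extDiff A B).map (· - g) := by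
  simp only [extDiff, Finset.image_val_of_injOn (add_right_injective g).injOn,
    Multiset.map_bind, Multiset.map_map, Function.comp_def, sub_add_eq_sub_sub_swap]

theorem extDiff_biUnion_left [DecidableEq G] {ι : Type*} {s : Finset ι} {B : ι → Finset G}
    (h : (s : Set ι).PairwiseDisjoint B) (C : Finset G) :
    extDiff (s.biUnion B) C = s.val.bind fun i => extDiff (B i) C := by
  rw [← Finset.disjiUnion_eq_biUnion _ _ h]
  simp only [extDiff, Finset.disjiUnion_val, Multiset.bind_assoc]

theorem extDiff_biUnion_right [DecidableEq G] {ι : Type*} (A : Finset G) {s : Finset ι}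
    {C : ι → Finset G} (h : (s : Set ι).PairwiseDisjoint C) :
    extDiff A (s.biUnion C) = s.val.bind fun i => extDiff A (C i) := by
  rw [← Finset.disjiUnion_eq_biUnion _ _ h]
  simp only [extDiff, Finset.disjiUnion_val, Multiset.map_bind]
  exact Multiset.bind_bind _ _

variable [DecidableEq G] {ι : Type*} [Fintype ι] {g : ι → G} {A : Finset G}

theorem card_biUnion_image_add (hg : Pairwise (Disjoint on fun i => A.image (g i + ·))) :
    (Finset.univ.biUnion fun i => A.image (g i + ·)).card = Fintype.card ι * A.card := by
  rw [Finset.card_biUnion fun i _ j _ hij => hg hij]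
  simp only [Finset.card_image_of_injective _ (add_right_injective _), Finset.sum_const,
    Finset.card_univ, smul_eq_mul]

variable [Fintype G]

theorem extDiff_biUnion_image_add_left (hg : Pairwise (Disjoint on fun i => A.image (g i + ·)))
    {B : Finset G} {lam : ℕ} (h : extDiff A B = lam • Finset.univ.val) :
    extDiff (Finset.univ.biUnion fun i => A.image (g i + ·)) B
      = (Fintype.card ι * lam) • Finset.univ.val := by
  rw [extDiff_biUnion_left (hg.set_pairwise _)]
  simp only [extDiff_image_add_left, h, Multiset.map_nsmul,
    fun i => (Multiset.bijective_iff_map_univ_eq_univ (g i + ·)).1 (Equiv.addLeft (g i)).bijective]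
  rw [Multiset.bind_const, Finset.card_val, Finset.card_univ, smul_smul]

theorem extDiff_biUnion_image_add_right (hg : Pairwise (Disjoint on fun i => A.image (g i + ·)))
    {B : Finset G} {lam : ℕ} (h : extDiff B A = lam • Finset.univ.val) :
    extDiff B (Finset.univ.biUnion fun i => A.image (g i + ·))
      = (Fintype.card ι * lam) • Finset.univ.val := by
  rw [extDiff_biUnion_right _ (hg.set_pairwise _)]
  simp only [extDiff_image_add_right, h, Multiset.map_nsmul,
    fun i => (Multiset.bijective_iff_map_univ_eq_univ (· - g i)).1 (Equiv.subRight (g i)).bijective]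
  rw [Multiset.bind_const, Finset.card_val, Finset.card_univ, smul_smul]

end extDiff

open Function in
theorem IsNDGPSEDF.update {G : Type*} [AddGroup G] [Fintype G] {m : ℕ} {A : Fin m → Finset G}
    {k : Fin m → ℕ} (hA : IsNDGPSEDF A k) (i₀ : Fin m) {B : Finset G} {c : ℕ}
    (hB : B.card = c * k i₀)
    (hleft : ∀ j ≠ i₀, ∀ lam : ℕ, extDiff (A i₀) (A j) = lam • Finset.univ.val →
      extDiff B (A j) = (c * lam) • Finset.univ.val)
    (hright : ∀ j ≠ i₀, ∀ lam : ℕ, extDiff (A j) (A i₀) = lam • Finset.univ.val →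
      extDiff (A j) B = (c * lam) • Finset.univ.val) :
    IsNDGPSEDF (update A i₀ B) (update k i₀ (c * k i₀)) := by
  refine ⟨fun i => ?_, fun i j hij => ?_⟩
  · rcases eq_or_ne i i₀ with rfl | hi
    · simpa using hB
    · simpa [hi] using hA.1 i
  obtain ⟨lam, hlam, hdiff⟩ := hA.2 i j hij
  rcases eq_or_ne i i₀ with rfl | hi
  · have hj : j ≠ i := hij.symm
    refine ⟨c * lam, ?_, ?_⟩ <;> simp only [update_self, update_of_ne hj]
    · rw [mul_assoc, hlam, mul_assoc]
    · exact hleft j hj lam hdiff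
  rcases eq_or_ne j i₀ with rfl | hj
  · refine ⟨c * lam, ?_, ?_⟩ <;> simp only [update_self, update_of_ne hi]
    · rw [mul_assoc, hlam, mul_left_comm]
    · exact hright i hi lam hdiff
  · exact ⟨lam, by simpa [hi, hj] using hlam, by simpa [hi, hj] using hdiff⟩

theorem stmt_6_general {G : Type*} [AddGroup G] [Fintype G] [DecidableEq G]
    (m n : ℕ)
    (A : Fin m → Finset G) (k : Fin m → ℕ)
    (hA : IsNDGPSEDF A k) (i₀ : Fin m) (g : Fin n → G)
    (hdisj : ∀ i j, i ≠ j →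
      Disjoint ((A i₀).image (fun a => g i + a)) ((A i₀).image (fun a => g j + a))) :
    IsNDGPSEDF
      (Function.update A i₀ (Finset.univ.biUnion (fun i => (A i₀).image (fun a => g i + a))))
      (Function.update k i₀ (n * k i₀)) := by
  refine hA.update i₀ ?_ (fun j _ lam h => ?_) (fun j _ lam h => ?_)
  · rw [card_biUnion_image_add hdisj, Fintype.card_fin, hA.1 i₀]
  · simpa using extDiff_biUnion_image_add_left hdisj h
  · simpa using extDiff_biUnion_image_add_right hdisj h

/-- if `{A₁,…,A_m}` is a non-disjoint `(v,m,k₁,…,k_m)`-GPSEDF in a finite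
(not necessarily abelian) group `G`, and `g₁,…,g_n ∈ G` are such that the translates
`gᵢ + A_{i₀}` are pairwise disjoint, then replacing `A_{i₀}` by `⋃_{i=1}^n (gᵢ + A_{i₀})`
yields a non-disjoint `(v,m,k₁,…,k_{i₀-1}, n·k_{i₀}, k_{i₀+1},…,k_m)`-GPSEDF. -/
theorem stmt_6 {G : Type*} [AddGroup G] [Fintype G] [DecidableEq G]
    (v m n : ℕ) (hv : Fintype.card G = v) (hm : 1 < m)
    (A : Fin m → Finset G) (k : Fin m → ℕ)
    (hA : IsNDGPSEDF A k) (i₀ : Fin m) (g : Fin n → G)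
    (hdisj : ∀ i j, i ≠ j →
      Disjoint ((A i₀).image (fun a => g i + a)) ((A i₀).image (fun a => g j + a))) :
    IsNDGPSEDF
      (Function.update A i₀ (Finset.univ.biUnion (fun i => (A i₀).image (fun a => g i + a))))
      (Function.update k i₀ (n * k i₀)) :=
  stmt_6_general m n A k hA i₀ g hdisj
end

section
/- Let m ≥ 2. Let c_0, c_1, …, c_{m−1} be integers with c_i ≥ 2 for 0 ≤ i ≤ m−1, let c_m ≥ 1 be a natural number, and let d_1, …, d_m be integers with 1 ≤ d_i ≤ c_{i−1} − 1 for 1 ≤ i ≤ m. Set v = c_0 c_1 ⋯ c_m. Then there exists a non-disjoint (v, m, d_1·v/c_0, d_2·v/c_1, …, d_m·v/c_{m−1})-GPSEDF in ℤ_v. -/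
open Finset

section ExtDiff

variable {G : Type*} [AddGroup G]

theorem card_extDiff (A B : Finset G) : Multiset.card (extDiff A B) = #A * #B := by
  simp [extDiff, Multiset.card_bind]

theorem extDiff_swap (A B : Finset G) : extDiff B A = (extDiff A B).map Neg.neg := by
  simp only [extDiff, Multiset.map_bind, Multiset.map_map, Function.comp_def, neg_sub]
  exact Multiset.bind_map_comm _ _

theorem count_extDiff [DecidableEq G] (A B : Finset G) (g : G) :
    Multiset.count g (extDiff A B) = #{a ∈ A | -g + a ∈ B} := by
  rw [extDiff, Multiset.count_bind, card_filter, Finset.sum]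
  refine congrArg Multiset.sum (Multiset.map_congr rfl fun a _ => ?_)
  have hcount := Multiset.count_map_eq_count' _ B.val (sub_right_injective (b := a)) (-g + a)
  rw [show a - (-g + a) = g by simp [sub_eq_add_neg]] at hcount
  rw [hcount]
  split_ifs with h
  · exact Multiset.count_eq_one_of_mem B.nodup h
  · exact Multiset.count_eq_zero_of_notMem h

variable [Fintype G]

theorem card_mul_eq_of_extDiff_eq_nsmul_univ {A B : Finset G} {n : ℕ}
    (h : extDiff A B = n • (univ : Finset G).val) : n * Fintype.card G = #A * #B := by
  rw [← card_extDiff, h, Multiset.card_nsmul, card_val, card_univ]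

theorem extDiff_swap_eq_nsmul_univ {A B : Finset G} {n : ℕ}
    (h : extDiff A B = n • (univ : Finset G).val) :
    extDiff B A = n • (univ : Finset G).val := by
  rw [extDiff_swap, h, Multiset.map_nsmul]
  exact congrArg _ (Multiset.map_univ_val_equiv (Equiv.neg G))

theorem extDiff_eq_nsmul_univ_of_preimage {K : Type*} [DecidableEq G] [AddGroup K]
    [DecidableEq K] (f : G →+ K) {A B : Finset G} {S : Finset K} {t : ℕ}
    (hA : ∀ y, #{a ∈ A | f a = y} = t) (hB : ∀ b, b ∈ B ↔ f b ∈ S) :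
    extDiff A B = (#S * t) • (univ : Finset G).val := by
  refine Multiset.ext.2 fun g => ?_
  rw [count_extDiff, Multiset.count_nsmul, Multiset.count_eq_one_of_mem univ.nodup (mem_univ g),
    mul_one]
  have hmaps :
      Set.MapsTo (fun a => -f g + f a) (({a ∈ A | -g + a ∈ B} : Finset G) : Set G) S := by
    intro a ha
    simpa [hB] using (mem_filter.1 ha).2
  rw [card_eq_sum_card_fiberwise hmaps, ← smul_eq_mul, ← sum_const]
  refine sum_congr rfl fun y hy => ?_
  rw [filter_filter, ← hA (f g + y)]
  congr 1
  refine filter_congr fun a _ => ?_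
  simp only [hB, map_add, map_neg, neg_add_eq_iff_eq_add]
  refine ⟨And.right, fun h => ⟨?_, h⟩⟩
  rwa [h, neg_add_cancel_left]

end ExtDiff

theorem Nat.count_mul_of_periodic {p : ℕ → Prop} [DecidablePred p] {P : ℕ}
    (hp : Function.Periodic p P) (k : ℕ) : Nat.count p (k * P) = k * Nat.count p P := by
  induction k with
  | zero => simp
  | succ k ih =>
    rw [Nat.succ_mul, Nat.count_add, ih, Nat.succ_mul]
    congr 2
    funext n
    rw [add_comm]
    simpa using hp.nat_mul k n

theorem ZMod.card_filter_val_eq_count {v : ℕ} [NeZero v] (p : ℕ → Prop) [DecidablePred p] :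
    #{x : ZMod v | p x.val} = Nat.count p v := by
  rw [Nat.count_eq_card_filter_range]
  refine card_nbij' ZMod.val (↑) ?_ ?_ ?_ ?_ <;> intro x hx <;>
    simp_all [ZMod.val_lt, Nat.mod_eq_of_lt]

theorem Nat.div_mul_mul_eq_mul_div {a b d v : ℕ} (h : a * b ∣ v) :
    v / (a * b) * (d * a) = d * (v / b) := by
  obtain ⟨w, rfl⟩ := h
  rcases Nat.eq_zero_or_pos a with rfl | ha
  · simp
  rcases Nat.eq_zero_or_pos b with rfl | hb
  · simp
  rw [Nat.mul_div_cancel_left w (by positivity), mul_right_comm, Nat.mul_div_cancel _ hb]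
  ring

def lowResidues (v P N : ℕ) [NeZero v] : Finset (ZMod v) :=
  {x | x.val % P < N}

section LowResidues

variable {v P Q N : ℕ} [NeZero v]

theorem card_filter_lowResidues_val_mod_eq (hQP : Q ∣ P) (hPv : P ∣ v) (hQN : Q ∣ N)
    (hNP : N ≤ P) {r : ℕ} (hr : r < Q) :
    #{x ∈ lowResidues v P N | x.val % Q = r} = v / P * (N / Q) := by
  set p : ℕ → Prop := fun n => n % P < N ∧ n % Q = r
  have hp : Function.Periodic p P := fun n => by
    obtain ⟨k, hk⟩ := hQP
    simp only [p, Nat.add_mod_right, hk, Nat.add_mul_mod_self_left]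
  calc #{x ∈ lowResidues v P N | x.val % Q = r}
      = Nat.count p v := by
        rw [lowResidues, filter_filter]
        exact ZMod.card_filter_val_eq_count p
    _ = Nat.count p (v / P * P) := by rw [Nat.div_mul_cancel hPv]
    _ = v / P * Nat.count p P := Nat.count_mul_of_periodic hp _
    _ = v / P * Nat.count (· ≡ r [MOD Q]) N := by
      rw [Nat.count_eq_card_filter_range, Nat.count_eq_card_filter_range]
      congr 2
      ext n
      simp only [p, mem_filter, mem_range, Nat.ModEq, Nat.mod_eq_of_lt hr]
      constructor
      · rintro ⟨hnP, hnN, hnr⟩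
        rw [Nat.mod_eq_of_lt hnP] at hnN
        exact ⟨hnN, hnr⟩
      · rintro ⟨hnN, hnr⟩
        have hnP := hnN.trans_le hNP
        exact ⟨hnP, by rwa [Nat.mod_eq_of_lt hnP], hnr⟩
    _ = v / P * (N / Q) := by
      rw [Nat.count_modEq_card N (by omega), Nat.mod_eq_zero_of_dvd hQN]
      simp

theorem card_lowResidues (hPv : P ∣ v) (hNP : N ≤ P) : #(lowResidues v P N) = v / P * N := by
  simpa only [Nat.mod_one, filter_true, Nat.div_one] using
    card_filter_lowResidues_val_mod_eq (one_dvd P) hPv (one_dvd N) hNP one_pos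

theorem extDiff_lowResidues {M : ℕ} (hQP : Q ∣ P) (hPv : P ∣ v) (hQN : Q ∣ N)
    (hNP : N ≤ P) (hMQ : M ≤ Q) :
    extDiff (lowResidues v P N) (lowResidues v Q M)
      = (M * (v / P * (N / Q))) • (univ : Finset (ZMod v)).val := by
  have hQv : Q ∣ v := hQP.trans hPv
  have : NeZero Q := ⟨fun h => NeZero.ne v (Nat.eq_zero_of_zero_dvd (h ▸ hQv))⟩
  set f := (ZMod.castHom hQv (ZMod Q)).toAddMonoidHom
  have hf : ∀ x : ZMod v, (f x).val = x.val % Q := fun x => by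
    change (ZMod.cast x : ZMod Q).val = _
    rw [ZMod.cast_eq_val, ZMod.val_natCast]
  have hS : #(lowResidues Q Q M) = M := by
    rw [card_lowResidues dvd_rfl hMQ, Nat.div_self (NeZero.pos Q), one_mul]
  rw [show M * _ = #(lowResidues Q Q M) * (v / P * (N / Q)) by rw [hS]]
  refine extDiff_eq_nsmul_univ_of_preimage f (fun y => ?_) (fun x => ?_)
  · rw [← card_filter_lowResidues_val_mod_eq hQP hPv hQN hNP (ZMod.val_lt y)]
    congr 1
    refine filter_congr fun x _ => ?_
    rw [← hf, (ZMod.val_injective Q).eq_iff]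
  · simp [lowResidues, hf]

end LowResidues

theorem exists_extDiff_lowResidues_eq_nsmul_univ {m v : ℕ} [NeZero v] {P : ℕ → ℕ}
    {N : Fin m → ℕ} (hP : ∀ {k l}, k ≤ l → P k ∣ P l) (hPv : P m ∣ v)
    (hPN : ∀ i : Fin m, P i ∣ N i) (hNP : ∀ i : Fin m, N i ≤ P (i + 1)) {i j : Fin m}
    (hij : i ≠ j) :
    ∃ lam : ℕ, extDiff (lowResidues v (P (i + 1)) (N i)) (lowResidues v (P (j + 1)) (N j))
      = lam • (univ : Finset (ZMod v)).val := by
  wlog hji : j < i generalizing i j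
  · obtain ⟨lam, h⟩ := this hij.symm (lt_of_le_of_ne (not_lt.1 hji) hij)
    exact ⟨lam, extDiff_swap_eq_nsmul_univ h⟩
  exact ⟨_, extDiff_lowResidues (hP (by omega)) ((hP i.2).trans hPv)
    ((hP hji).trans (hPN i)) (hNP i) (hNP j)⟩

/-- given `c₀,…,c_{m-1} ≥ 2`, `c_m ≥ 1` and `1 ≤ dᵢ ≤ c_{i-1} - 1`, with
`v = c₀c₁⋯c_m`, there exists a non-disjoint `(v, m, d₁·v/c₀, …, d_m·v/c_{m-1})`-GPSEDF
in `ℤ_v`. -/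
theorem stmt_8 (m : ℕ) (c : Fin (m + 1) → ℕ) (d : Fin m → ℕ)
    (hc : ∀ i : Fin m, 2 ≤ c i.castSucc) (hcm : 1 ≤ c (Fin.last m))
    (hd₂ : ∀ i, d i ≤ c i.castSucc - 1)
    (v : ℕ) (hv : v = ∏ i, c i) :
    haveI : NeZero v := ⟨by
      subst hv
      exact (Finset.prod_pos (fun i _ => Fin.lastCases (by omega)
        (fun j => by have := hc j; omega) i)).ne'⟩
    ∃ A : Fin m → Finset (ZMod v),
      (∀ i, (A i).card = d i * (v / c i.castSucc)) ∧
      ∀ i j, i ≠ j → ∃ lam : ℕ,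
        lam * v = (d i * (v / c i.castSucc)) * (d j * (v / c j.castSucc)) ∧
        extDiff (A i) (A j) = lam • (Finset.univ : Finset (ZMod v)).val := by
  have : NeZero v := ⟨by
    subst hv
    exact (Finset.prod_pos (fun i _ => Fin.lastCases (by omega)
      (fun j => by have := hc j; omega) i)).ne'⟩
  set P : ℕ → ℕ := fun k => ((List.ofFn c).take k).prod
  have hP : ∀ {k l}, k ≤ l → P k ∣ P l := fun hkl =>
    (List.take_sublist_take_left hkl).prod_dvd_prod
  have hPv : P (m + 1) = v := by
    dsimp only [P]
    rw [hv, ← List.prod_ofFn, List.take_of_length_le (by simp)]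
  have hPsucc : ∀ i : Fin m, P (i + 1) = P i * c i.castSucc := fun i => by
    dsimp only [P]
    rw [List.prod_take_succ _ _ (by simp), List.getElem_ofFn]
    rfl
  have hN : ∀ i : Fin m, d i * P i ≤ P (i + 1) := fun i => by
    rw [hPsucc, Nat.mul_comm (d i)]
    exact Nat.mul_le_mul_left _ (by have := hd₂ i; omega)
  have hcard : ∀ i : Fin m,
      #(lowResidues v (P (i + 1)) (d i * P i)) = d i * (v / c i.castSucc) := fun i => by
    have hPi : P (i + 1) ∣ v := hPv ▸ hP (by omega)
    rw [card_lowResidues hPi (hN i), hPsucc, Nat.div_mul_mul_eq_mul_div (hPsucc i ▸ hPi)]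
  refine ⟨fun i => lowResidues v (P (i + 1)) (d i * P i), hcard, fun i j hij => ?_⟩
  obtain ⟨lam, h⟩ := exists_extDiff_lowResidues_eq_nsmul_univ hP (hPv ▸ hP m.le_succ)
    (fun i => dvd_mul_left _ _) hN hij
  refine ⟨lam, ?_, h⟩
  rw [← hcard, ← hcard, ← card_mul_eq_of_extDiff_eq_nsmul_univ h, ZMod.card]
end
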